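/- Well-behavedness is preserved under restriction: if χ=(D(N,T),φ,ι) is a well-behaved (S,Y)-containment structure and g is a restriction function such that for all arcs uv of D(N,T) with g(ι(u)),g(ι(v))∈Y we have g(ι(u))=g(ι(v)), then the g-restriction of χ is well-behaved. -/

import Mathlib

namespace TreeContainment

open scoped Classical

variable {V Λ : Type}

/-- A directed graph with an explicit vertex set. -/
structure DGraph (V : Type) where
  verts : Set V
  Arc : V → V → Prop
  arc_left : ∀ ⦃u v : V⦄, Arc u v → u ∈ verts
  arc_right : ∀ ⦃u v : V⦄, Arc u v → v ∈ verts

noncomputable def DGraph.inDeg (G : DGraph V) (v : V) : ℕ := {u : V | G.Arc u v}.ncard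
noncomputable def DGraph.outDeg (G : DGraph V) (v : V) : ℕ := {u : V | G.Arc v u}.ncard
def DGraph.Acyclic (G : DGraph V) : Prop := ∀ v : V, ¬ Relation.TransGen G.Arc v v

def IsSubgraph (H G : DGraph V) : Prop :=
  H.verts ⊆ G.verts ∧ ∀ ⦃u v⦄, H.Arc u v → G.Arc u v

/-- The consecutive pairs (arcs) of a list of vertices. -/
def listArcs (p : List V) : List (V × V) := p.zip p.tail

def IsArcOf (p : List V) (a b : V) : Prop := (a, b) ∈ listArcs p

lemma isArcOf_mem_left {p : List V} {a b : V} (h : IsArcOf p a b) : a ∈ p :=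
  (List.of_mem_zip h).1

lemma isArcOf_mem_right {p : List V} {a b : V} (h : IsArcOf p a b) : b ∈ p :=
  List.mem_of_mem_tail (List.of_mem_zip h).2

/-- `p` is a directed path from `u` to `v` with respect to the arc relation `A`. -/
def DipathFrom (A : V → V → Prop) (u v : V) (p : List V) : Prop :=
  p.Chain' A ∧ p.Nodup ∧ p.head? = some u ∧ p.getLast? = some v

/-- Rooted binary phylogenetic network. -/
def IsBinPhyloNet (N : DGraph V) : Prop :=
  N.Acyclic ∧ N.verts.Finite ∧ N.verts.Nonempty ∧
  (∃! ρ, ρ ∈ N.verts ∧ N.inDeg ρ = 0) ∧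
  ∀ v ∈ N.verts,
    (N.inDeg v = 0 ∧ N.outDeg v = 2) ∨ (N.inDeg v = 1 ∧ N.outDeg v = 0) ∨
    (N.inDeg v = 2 ∧ N.outDeg v = 1) ∨ (N.inDeg v = 1 ∧ N.outDeg v = 2)

/-- Rooted binary phylogenetic tree: a binary phylogenetic network without reticulations. -/
def IsBinPhyloTree (T : DGraph V) : Prop :=
  IsBinPhyloNet T ∧ ∀ v ∈ T.verts, T.inDeg v ≤ 1

def leaves (G : DGraph V) : Set V :=
  {v : V | v ∈ G.verts ∧ G.inDeg v = 1 ∧ G.outDeg v = 0}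

/-- Equally labelled leaves of `N` and `T` are identified: the common vertices of the two
graphs are exactly the leaves of each side. -/
def SharedLeaves (N T : DGraph V) : Prop :=
  N.verts ∩ T.verts = leaves N ∧ N.verts ∩ T.verts = leaves T

/-- A witness that `H` is a subdivision of the tree `Tg`. -/
structure SubdivWitness (H Tg : DGraph V) where
  vmap : V → V
  pmap : V → V → List V
  vmap_mem : ∀ u ∈ Tg.verts, vmap u ∈ H.verts
  inj : ∀ u ∈ Tg.verts, ∀ v ∈ Tg.verts, vmap u = vmap v → u = v
  path_spec : ∀ ⦃u v⦄, Tg.Arc u v → DipathFrom H.Arc (vmap u) (vmap v) (pmap u v)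
  path_len : ∀ ⦃u v⦄, Tg.Arc u v → 2 ≤ (pmap u v).length
  internal_new : ∀ ⦃u v⦄, Tg.Arc u v → ∀ z ∈ pmap u v, z ≠ vmap u → z ≠ vmap v →
    ∀ w ∈ Tg.verts, vmap w ≠ z
  internal_disjoint : ∀ ⦃u v u' v'⦄, Tg.Arc u v → Tg.Arc u' v' → (u, v) ≠ (u', v') →
    ∀ z, z ∈ pmap u v → z ∈ pmap u' v' →
      (z = vmap u ∨ z = vmap v) ∧ (z = vmap u' ∨ z = vmap v')
  arcs_cover : ∀ a b, H.Arc a b → ∃ u v, Tg.Arc u v ∧ IsArcOf (pmap u v) a b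
  verts_cover : ∀ z ∈ H.verts, (∃ u ∈ Tg.verts, vmap u = z) ∨ ∃ u v, Tg.Arc u v ∧ z ∈ pmap u v

/-- `N` displays `T`: some subgraph of `N` is a subdivision of `T`, respecting
the (identified) leaf labels. -/
def Displays (N T : DGraph V) : Prop :=
  ∃ H : DGraph V, IsSubgraph H N ∧
    ∃ w : SubdivWitness H T, ∀ u ∈ T.verts ∩ N.verts, w.vmap u = u

/-- An embedding function of the tree `Tg` into the network `Ng`
(an embedding function on the display graph `D(Ng,Tg)`). -/
structure EmbOn (Tg Ng : DGraph V) where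
  vmap : V → V
  pmap : V → V → List V
  vmap_mem : ∀ u ∈ Tg.verts, vmap u ∈ Ng.verts
  path_spec : ∀ ⦃u v⦄, Tg.Arc u v → DipathFrom Ng.Arc (vmap u) (vmap v) (pmap u v)
  inj : ∀ u ∈ Tg.verts, ∀ v ∈ Tg.verts, vmap u = vmap v → u = v
  fixes : ∀ u ∈ Tg.verts ∩ Ng.verts, vmap u = u
  arc_disjoint : ∀ ⦃u v u' v'⦄, Tg.Arc u v → Tg.Arc u' v' → (u, v) ≠ (u', v') →
    ∀ e, e ∈ listArcs (pmap u v) → e ∉ listArcs (pmap u' v')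
  share : ∀ ⦃u v u' v'⦄, Tg.Arc u v → Tg.Arc u' v' → (u, v) ≠ (u', v') →
    ∀ z, z ∈ pmap u v → z ∈ pmap u' v' →
      ∃ w, (w = u ∨ w = v) ∧ (w = u' ∨ w = v') ∧ vmap w = z

/-- The subgraph of the network consisting of all arcs lying on some embedding path. -/
def usedSubgraph (Tg Ng : DGraph V) (φ : EmbOn Tg Ng) : DGraph V where
  verts := {z : V | ∃ u v, Tg.Arc u v ∧ z ∈ φ.pmap u v}
  Arc a b := ∃ u v, Tg.Arc u v ∧ IsArcOf (φ.pmap u v) a b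
  arc_left := by
    rintro a b ⟨u, v, huv, harc⟩
    exact ⟨u, v, huv, isArcOf_mem_left harc⟩
  arc_right := by
    rintro a b ⟨u, v, huv, harc⟩
    exact ⟨u, v, huv, isArcOf_mem_right harc⟩

/-- A display graph: a DAG whose vertex set is covered by a tree side `VT`
and a network side `VN`, satisfying the degree conditions of the paper. -/
structure DispGraph (V : Type) extends DGraph V where
  VT : Set V
  VN : Set V
  union_eq : VT ∪ VN = verts
  finite : verts.Finite
  acyclic : ∀ v : V, ¬ Relation.TransGen Arc v v
  tree_indeg : ∀ v : V, {u : V | Arc u v ∧ u ∈ VT ∧ v ∈ VT}.ncard ≤ 1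
  indeg_le : ∀ v : V, {u : V | Arc u v}.ncard ≤ 2
  outdeg_le : ∀ v : V, {u : V | Arc v u}.ncard ≤ 2
  totdeg_le : ∀ v : V, {u : V | Arc u v}.ncard + {u : V | Arc v u}.ncard ≤ 3
  shared_out : ∀ v ∈ VT ∩ VN, ∀ u, ¬ Arc v u
  shared_in_T : ∀ v ∈ VT ∩ VN, {u : V | Arc u v ∧ u ∈ VT}.ncard ≤ 1
  shared_in_N : ∀ v ∈ VT ∩ VN, {u : V | Arc u v ∧ u ∈ VN}.ncard ≤ 1

/-- The tree side of a display graph. -/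
def DispGraph.treeSide (G : DispGraph V) : DGraph V where
  verts := G.VT
  Arc u v := G.Arc u v ∧ u ∈ G.VT ∧ v ∈ G.VT
  arc_left := by intro u v h; exact h.2.1
  arc_right := by intro u v h; exact h.2.2

/-- The network side of a display graph. -/
def DispGraph.netSide (G : DispGraph V) : DGraph V where
  verts := G.VN
  Arc u v := G.Arc u v ∧ u ∈ G.VN ∧ v ∈ G.VN
  arc_left := by intro u v h; exact h.2.1
  arc_right := by intro u v h; exact h.2.2

def DispGraph.TArc (G : DispGraph V) (u v : V) : Prop := G.treeSide.Arc u v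
def DispGraph.NArc (G : DispGraph V) (u v : V) : Prop := G.netSide.Arc u v
noncomputable def DispGraph.inDeg (G : DispGraph V) : V → ℕ := G.toDGraph.inDeg
noncomputable def DispGraph.outDeg (G : DispGraph V) : V → ℕ := G.toDGraph.outDeg

/-- An embedding function on a display graph: an embedding of its tree side into
its network side. -/
abbrev EmbFun (G : DispGraph V) := EmbOn G.treeSide G.netSide

/-- The data of a containment structure: a display graph, an embedding function on it,
and an isolabelling into vertices of the ambient display graph or labels from `Λ`. -/
structure CStruct (V Λ : Type) where
  G : DispGraph V
  emb : EmbFun G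
  ι : V → V ⊕ Λ

/-- Relabelling a containment structure by a restriction function. -/
def CStruct.relabel (g : V ⊕ Λ → V ⊕ Λ) (χ : CStruct V Λ) : CStruct V Λ :=
  ⟨χ.G, χ.emb, fun v => g (χ.ι v)⟩

/-- `ι` is an `(S,Y)`-isolabelling on the display graph of `χ`, relative to the
ambient display graph `Din`. -/
def IsIsolabelling (Din : DispGraph V) (S : Set V) (Ys : Set Λ) (χ : CStruct V Λ) : Prop :=
  (∀ u ∈ χ.G.verts, (∃ s ∈ S, χ.ι u = Sum.inl s) ∨ (∃ y ∈ Ys, χ.ι u = Sum.inr y)) ∧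
  (∀ s ∈ S, ∃ u ∈ χ.G.verts, χ.ι u = Sum.inl s) ∧
  (∀ u ∈ χ.G.verts, ∀ s ∈ S, χ.ι u = Sum.inl s →
    (s ∈ Din.VN → u ∈ χ.G.VN) ∧ (s ∈ Din.VT → u ∈ χ.G.VT)) ∧
  (∀ u ∈ χ.G.verts, ∀ v ∈ χ.G.verts, ∀ s ∈ S, χ.ι u = Sum.inl s → χ.ι v = Sum.inl s → u = v) ∧
  (∀ u ∈ χ.G.verts, ∀ v ∈ χ.G.verts, ∀ s ∈ S, ∀ t ∈ S,
    χ.ι u = Sum.inl s → χ.ι v = Sum.inl t → (χ.G.Arc u v ↔ Din.Arc s t))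

/-- `χ` is an `(S,Y)`-containment structure relative to the ambient display graph `Din`. -/
def IsCS (Din : DispGraph V) (S : Set V) (Ys : Set Λ) (χ : CStruct V Λ) : Prop :=
  IsIsolabelling Din S Ys χ ∧
  (∀ u ∈ χ.G.verts, ∀ s ∈ S, χ.ι u = Sum.inl s →
    χ.G.inDeg u = Din.inDeg s ∧ χ.G.outDeg u = Din.outDeg s) ∧
  (∀ u ∈ χ.G.VT, χ.ι u ≠ χ.ι (χ.emb.vmap u) → χ.G.outDeg u = 2)

/-- A tree arc `uv` is `y`-redundant. -/
def TArcRedundant (χ : CStruct V Λ) (y : Λ) (u v : V) : Prop :=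
  χ.G.TArc u v ∧ χ.ι u = Sum.inr y ∧ χ.ι v = Sum.inr y ∧
    ∀ z ∈ χ.emb.pmap u v, χ.ι z = Sum.inr y

/-- A network arc `ab` is `y`-redundant. -/
def NArcRedundant (χ : CStruct V Λ) (y : Λ) (a b : V) : Prop :=
  χ.G.NArc a b ∧ χ.ι a = Sum.inr y ∧ χ.ι b = Sum.inr y ∧
    ∀ u v, χ.G.TArc u v → IsArcOf (χ.emb.pmap u v) a b → TArcRedundant χ y u v

def ArcRedundant (χ : CStruct V Λ) (y : Λ) (u v : V) : Prop :=
  TArcRedundant χ y u v ∨ NArcRedundant χ y u v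

/-- A tree vertex `v` is `y`-redundant. -/
def TVertRedundant (χ : CStruct V Λ) (y : Λ) (v : V) : Prop :=
  v ∈ χ.G.VT ∧ χ.ι v = Sum.inr y ∧ χ.ι (χ.emb.vmap v) = Sum.inr y ∧
  (∀ u, χ.G.Arc u v → ArcRedundant χ y u v) ∧
  (∀ u, χ.G.Arc v u → ArcRedundant χ y v u) ∧
  (∀ u, χ.G.Arc u (χ.emb.vmap v) → ArcRedundant χ y u (χ.emb.vmap v)) ∧
  (∀ u, χ.G.Arc (χ.emb.vmap v) u → ArcRedundant χ y (χ.emb.vmap v) u)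

/-- A network vertex `v` is `y`-redundant. -/
def NVertRedundant (χ : CStruct V Λ) (y : Λ) (v : V) : Prop :=
  v ∈ χ.G.VN ∧ χ.ι v = Sum.inr y ∧
  (∀ u, χ.G.Arc u v → ArcRedundant χ y u v) ∧
  (∀ u, χ.G.Arc v u → ArcRedundant χ y v u) ∧
  (∀ w ∈ χ.G.VT, χ.emb.vmap w = v → TVertRedundant χ y w)

def VertRedundant (χ : CStruct V Λ) (y : Λ) (v : V) : Prop :=
  TVertRedundant χ y v ∨ NVertRedundant χ y v

/-- `χ'` is the `g`-restriction of `χ`: relabel by `g` and delete all redundant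
arcs and vertices; the embedding and isolabelling are restricted accordingly. -/
def IsRestrictionOf (g : V ⊕ Λ → V ⊕ Λ) (χ' χ : CStruct V Λ) : Prop :=
  χ'.G.verts = χ.G.verts \ {v : V | ∃ y, VertRedundant (χ.relabel g) y v} ∧
  (∀ u v, χ'.G.Arc u v ↔ (χ.G.Arc u v ∧ ¬ ∃ y, ArcRedundant (χ.relabel g) y u v)) ∧
  χ'.G.VT = χ.G.VT ∩ χ'.G.verts ∧
  χ'.G.VN = χ.G.VN ∩ χ'.G.verts ∧
  (∀ v ∈ χ'.G.VT, χ'.emb.vmap v = χ.emb.vmap v) ∧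
  (∀ u v, χ'.G.TArc u v → χ'.emb.pmap u v = χ.emb.pmap u v) ∧
  (∀ v ∈ χ'.G.verts, χ'.ι v = g (χ.ι v))

/-- `g : S ∪ Y → S' ∪ Y` is a restriction function: identity on `S'`, mapping the rest
of `S` into `Y`, and mapping `Y` into `Y`. -/
def IsRestrictionFun (S S' : Set V) (Ys : Set Λ) (g : V ⊕ Λ → V ⊕ Λ) : Prop :=
  (∀ v ∈ S', g (Sum.inl v) = Sum.inl v) ∧
  (∀ v ∈ S, v ∉ S' → ∃ y ∈ Ys, g (Sum.inl v) = Sum.inr y) ∧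
  (∀ y ∈ Ys, ∃ y' ∈ Ys, g (Sum.inr y) = Sum.inr y')

/-- A well-behaved containment structure. -/
def WellBehaved (Din : DispGraph V) (Ys : Set Λ) (χ : CStruct V Λ) : Prop :=
  (∀ u v, χ.G.Arc u v → ¬ ∃ y ∈ Ys, ArcRedundant χ y u v) ∧
  (∀ v ∈ χ.G.verts, ¬ ∃ y ∈ Ys, VertRedundant χ y v) ∧
  (∀ u v, χ.G.Arc u v → ∀ y ∈ Ys, ∀ y' ∈ Ys,
    χ.ι u = Sum.inr y → χ.ι v = Sum.inr y' → y = y') ∧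
  (∀ u ∈ χ.G.verts, ∀ v ∈ χ.G.verts, ∀ s t : V, χ.ι u = Sum.inl s → χ.ι v = Sum.inl t →
    Relation.ReflTransGen χ.G.Arc u v → Relation.ReflTransGen Din.Arc s t)

/-- The labels used for signatures and reconciliations. -/
inductive Lab : Type where
  | past | future | left | right
deriving DecidableEq

/-- The restriction function sending every vertex of `P` to the label `y`. -/
noncomputable def sendVerts (P : Set V) (y : Lab) : V ⊕ Lab → V ⊕ Lab
  | Sum.inl v => if v ∈ P then Sum.inr y else Sum.inl v
  | Sum.inr y' => Sum.inr y'

/-- The restriction function sending `A` to label `a` and `B` to label `b`. -/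
noncomputable def sendVerts2 (A : Set V) (a : Lab) (B : Set V) (b : Lab) :
    V ⊕ Lab → V ⊕ Lab
  | Sum.inl v => if v ∈ A then Sum.inr a else if v ∈ B then Sum.inr b else Sum.inl v
  | Sum.inr y => Sum.inr y

/-- The restriction function merging all labels in `A` into the label `y`. -/
noncomputable def sendLabs (A : Set Lab) (y : Lab) : V ⊕ Lab → V ⊕ Lab
  | Sum.inl v => Sum.inl v
  | Sum.inr y' => if y' ∈ A then Sum.inr y else Sum.inr y'

/-- The restriction function sending label `a` to `ya` and label `b` to `yb`. -/
def sendTwoLabs (a ya b yb : Lab) : V ⊕ Lab → V ⊕ Lab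
  | Sum.inl v => Sum.inl v
  | Sum.inr y => if y = a then Sum.inr ya else if y = b then Sum.inr yb else Sum.inr y

/-- `(P,S,F)` is a bag of a tree decomposition of `Din`: a partition of the vertices
with `S` separating `P` from `F`. -/
def IsBag (Din : DispGraph V) (P S F : Set V) : Prop :=
  P ∪ S ∪ F = Din.verts ∧ Disjoint P S ∧ Disjoint P F ∧ Disjoint S F ∧
  ∀ u v, (Din.Arc u v ∨ Din.Arc v u) → u ∈ P → v ∈ F → False

def pfLabs : Set Lab := {Lab.past, Lab.future}
def lrfLabs : Set Lab := {Lab.left, Lab.right, Lab.future}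

/-- A signature for a bag with present `S` is an `(S,{past,future})`-containment structure. -/
def IsSignature (Din : DispGraph V) (S : Set V) (σ : CStruct V Lab) : Prop :=
  IsCS Din S pfLabs σ

/-- An `F`-partial solution for a bag `(P,S,F)` is a `(P∪S,{future})`-containment structure. -/
def IsPartialSolution (Din : DispGraph V) (P S : Set V) (ψ : CStruct V Lab) : Prop :=
  IsCS Din (P ∪ S) ({Lab.future} : Set Lab) ψ

/-- A (well-behaved) signature is valid for the bag `(P,S,F)` if it is the
`(P→past)`-restriction of a well-behaved `F`-partial solution. -/
def ValidSig (Din : DispGraph V) (P S F : Set V) (σ : CStruct V Lab) : Prop :=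
  ∃ ψ : CStruct V Lab, IsPartialSolution Din P S ψ ∧
    WellBehaved Din ({Lab.future} : Set Lab) ψ ∧
    IsRestrictionOf (sendVerts P Lab.past) σ ψ

/-- A reconciliation for a Join bag with present `S` is an
`(S,{left,right,future})`-containment structure. -/
def IsReconciliation (Din : DispGraph V) (S : Set V) (μ : CStruct V Lab) : Prop :=
  IsCS Din S lrfLabs μ

/-- A reconciliation is valid for the Join bag `(L∪R,S,F)` if it is the
`(L→left, R→right)`-restriction of a well-behaved `F`-partial solution. -/
def ValidRecon (Din : DispGraph V) (L R S F : Set V) (μ : CStruct V Lab) : Prop :=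
  ∃ ψ : CStruct V Lab, IsCS Din (L ∪ R ∪ S) ({Lab.future} : Set Lab) ψ ∧
    WellBehaved Din ({Lab.future} : Set Lab) ψ ∧
    IsRestrictionOf (sendVerts2 L Lab.left R Lab.right) μ ψ

/-- `z` is an internal vertex of the replacement path `Pm u v`. -/
def internalOf (Pm : V → V → List V) (u v z : V) : Prop :=
  z ∈ Pm u v ∧ z ≠ u ∧ z ≠ v

/-- `σ₀` is a subdivision of the containment structure `σ`, with each network
arc `uv` of `σ` replaced by the path `Pm u v`. -/
def IsSubdivisionOfCS (σ₀ σ : CStruct V Λ) (Pm : V → V → List V) : Prop :=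
  σ₀.G.VT = σ.G.VT ∧
  (∀ u v, σ₀.G.TArc u v ↔ σ.G.TArc u v) ∧
  σ.G.VN ⊆ σ₀.G.VN ∧
  σ₀.G.verts = σ.G.verts ∪ {z : V | ∃ u v, σ.G.NArc u v ∧ z ∈ Pm u v} ∧
  (∀ u v, σ.G.NArc u v → DipathFrom σ₀.G.NArc u v (Pm u v) ∧ 2 ≤ (Pm u v).length) ∧
  (∀ u v, σ.G.NArc u v → 2 < (Pm u v).length →
    ∃ y : Λ, σ.ι u = Sum.inr y ∧ σ.ι v = Sum.inr y) ∧
  (∀ u v, σ.G.NArc u v → ∀ z, internalOf Pm u v z →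
    z ∉ σ.G.verts ∧ z ∈ σ₀.G.VN ∧ σ₀.ι z = σ.ι u) ∧
  (∀ u v u' v', σ.G.NArc u v → σ.G.NArc u' v' → (u, v) ≠ (u', v') →
    ∀ z, internalOf Pm u v z → ¬ internalOf Pm u' v' z) ∧
  (∀ a b, σ₀.G.NArc a b ↔ ∃ u v, σ.G.NArc u v ∧ IsArcOf (Pm u v) a b) ∧
  (∀ v ∈ σ.G.verts, σ₀.ι v = σ.ι v) ∧
  (∀ v ∈ σ.G.VT, σ₀.emb.vmap v = σ.emb.vmap v) ∧
  (∀ u v, σ.G.TArc u v →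
    (σ₀.emb.pmap u v).head? = (σ.emb.pmap u v).head? ∧
    (σ₀.emb.pmap u v).getLast? = (σ.emb.pmap u v).getLast? ∧
    ∀ a b, IsArcOf (σ₀.emb.pmap u v) a b ↔
      ∃ c d, IsArcOf (σ.emb.pmap u v) c d ∧ IsArcOf (Pm c d) a b)

/-- `χ` has a long `y`-path: a suppressible degree-(1,1) network vertex between two
network arcs, all three vertices labelled `y`, with no tree vertex embedded into it. -/
def LongYPath (χ : CStruct V Λ) (y : Λ) : Prop :=
  ∃ x₁ x₂ x₃ : V, χ.G.NArc x₁ x₂ ∧ χ.G.NArc x₂ x₃ ∧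
    {u : V | χ.G.NArc u x₂}.ncard = 1 ∧ {u : V | χ.G.NArc x₂ u}.ncard = 1 ∧
    χ.ι x₁ = Sum.inr y ∧ χ.ι x₂ = Sum.inr y ∧ χ.ι x₃ = Sum.inr y ∧
    ∀ w ∈ χ.G.VT, χ.emb.vmap w ≠ x₂

def IsCompact (χ : CStruct V Λ) : Prop := ∀ y : Λ, ¬ LongYPath χ y

/-- `σ` is the compact form of `σ₀`: `σ` is compact and `σ₀` is a subdivision of `σ`. -/
def IsCompactFormOf (σ σ₀ : CStruct V Λ) : Prop :=
  IsCompact σ ∧ ∃ Pm : V → V → List V, IsSubdivisionOfCS σ₀ σ Pm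

/-- Isomorphism of containment structures. -/
def CSIso (χ χ' : CStruct V Λ) : Prop :=
  ∃ f : V → V, Set.BijOn f χ.G.verts χ'.G.verts ∧
    (∀ v ∈ χ.G.verts, (v ∈ χ.G.VT ↔ f v ∈ χ'.G.VT)) ∧
    (∀ v ∈ χ.G.verts, (v ∈ χ.G.VN ↔ f v ∈ χ'.G.VN)) ∧
    (∀ u ∈ χ.G.verts, ∀ v ∈ χ.G.verts, (χ.G.Arc u v ↔ χ'.G.Arc (f u) (f v))) ∧
    (∀ v ∈ χ.G.verts, χ'.ι (f v) = χ.ι v) ∧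
    (∀ v ∈ χ.G.VT, χ'.emb.vmap (f v) = f (χ.emb.vmap v)) ∧
    (∀ u v, χ.G.TArc u v → χ'.emb.pmap (f u) (f v) = (χ.emb.pmap u v).map f)

/-! ### Auxiliary lemmas for Statement 7 -/

private lemma chain'_head_or_pred {α : Type} {R : α → α → Prop} :
    ∀ {l : List α}, l.Chain' R → ∀ z ∈ l, l.head? = some z ∨ ∃ w, R w z := by
  intro l
  induction l with
  | nil => intro _ z hz; exact absurd hz List.not_mem_nil
  | cons a l ih =>
    intro hc z hz
    rcases List.mem_cons.1 hz with rfl | hz'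
    · exact Or.inl rfl
    · cases l with
      | nil => exact absurd hz' List.not_mem_nil
      | cons b l' =>
        have hcc := List.isChain_cons_cons.1 hc
        rcases List.mem_cons.1 hz' with rfl | hz''
        · exact Or.inr ⟨a, hcc.1⟩
        · rcases ih hcc.2 z (List.mem_cons.2 (Or.inr hz'')) with h | h
          · simp only [List.head?] at h
            have hbz : b = z := Option.some.inj h
            exact Or.inr ⟨a, hbz ▸ hcc.1⟩
          · exact Or.inr h

private lemma VT_sub_verts (G : DispGraph V) : G.VT ⊆ G.verts :=
  fun z hz => G.union_eq ▸ (Or.inl hz : z ∈ G.VT ∪ G.VN)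

private lemma VN_sub_verts (G : DispGraph V) : G.VN ⊆ G.verts :=
  fun z hz => G.union_eq ▸ (Or.inr hz : z ∈ G.VT ∪ G.VN)

private lemma pm_mem_VN {χ' : CStruct V Λ} {u v z : V} (ht : χ'.G.TArc u v)
    (hz : z ∈ χ'.emb.pmap u v) : z ∈ χ'.G.VN := by
  obtain ⟨hc, -, hh, -⟩ := χ'.emb.path_spec ht
  rcases chain'_head_or_pred hc z hz with h | ⟨w, hw⟩
  · have : χ'.emb.vmap u = z := Option.some.inj (hh.symm.trans h)
    exact this ▸ (χ'.emb.vmap_mem u ht.2.1)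
  · exact hw.2.2

section Transfer

variable {g : V ⊕ Λ → V ⊕ Λ} {χ χ' : CStruct V Λ}

private lemma res_VT (hres : IsRestrictionOf g χ' χ) {v : V} (hv : v ∈ χ'.G.VT) :
    v ∈ χ.G.VT := by
  rw [hres.2.2.1] at hv; exact hv.1

private lemma res_VN (hres : IsRestrictionOf g χ' χ) {v : V} (hv : v ∈ χ'.G.VN) :
    v ∈ χ.G.VN := by
  rw [hres.2.2.2.1] at hv; exact hv.1

private lemma res_ι (hres : IsRestrictionOf g χ' χ) {v : V} (hv : v ∈ χ'.G.verts) :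
    g (χ.ι v) = χ'.ι v := (hres.2.2.2.2.2.2 v hv).symm

private lemma transfer_tarcred (hres : IsRestrictionOf g χ' χ) {y : Λ} {u v : V}
    (h : TArcRedundant χ' y u v) : TArcRedundant (χ.relabel g) y u v := by
  obtain ⟨ht, hu, hv, hall⟩ := h
  have huV : u ∈ χ'.G.verts := VT_sub_verts _ ht.2.1
  have hvV : v ∈ χ'.G.verts := VT_sub_verts _ ht.2.2
  have htχ : χ.G.TArc u v := ⟨((hres.2.1 u v).1 ht.1).1, res_VT hres ht.2.1, res_VT hres ht.2.2⟩
  have hpm : χ'.emb.pmap u v = χ.emb.pmap u v := hres.2.2.2.2.2.1 u v ht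
  refine ⟨htχ, (res_ι hres huV).trans hu, (res_ι hres hvV).trans hv, ?_⟩
  intro z hz
  have hzc : z ∈ χ.emb.pmap u v := hz
  rw [← hpm] at hzc
  have hzV : z ∈ χ'.G.verts := VN_sub_verts _ (pm_mem_VN ht hzc)
  exact (res_ι hres hzV).trans (hall z hzc)

private lemma transfer_arcred (hres : IsRestrictionOf g χ' χ) {y : Λ} {u v : V}
    (h : ArcRedundant χ' y u v) : ArcRedundant (χ.relabel g) y u v := by
  rcases h with hT | hN
  · exact Or.inl (transfer_tarcred hres hT)
  · obtain ⟨hn, ha, hb, hall⟩ := hN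
    have haV : u ∈ χ'.G.verts := VN_sub_verts _ hn.2.1
    have hbV : v ∈ χ'.G.verts := VN_sub_verts _ hn.2.2
    have hnχ : χ.G.NArc u v := ⟨((hres.2.1 u v).1 hn.1).1, res_VN hres hn.2.1, res_VN hres hn.2.2⟩
    refine Or.inr ⟨hnχ, (res_ι hres haV).trans ha, (res_ι hres hbV).trans hb, ?_⟩
    intro p q hpq hiso
    by_cases hsurv : χ'.G.Arc p q
    · have hpq' : χ'.G.TArc p q :=
        ⟨hsurv, by rw [hres.2.2.1]; exact ⟨hpq.2.1, χ'.G.arc_left hsurv⟩,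
          by rw [hres.2.2.1]; exact ⟨hpq.2.2, χ'.G.arc_right hsurv⟩⟩
      exact transfer_tarcred hres
        (hall p q hpq' (by rw [hres.2.2.2.2.2.1 p q hpq']; exact hiso))
    · obtain ⟨y', hy'⟩ : ∃ y', ArcRedundant (χ.relabel g) y' p q := by
        by_contra hno
        exact hsurv ((hres.2.1 p q).2 ⟨hpq.1, hno⟩)
      rcases hy' with hT' | hN'
      · have hmu : u ∈ χ.emb.pmap p q := isArcOf_mem_left hiso
        have h1 : g (χ.ι u) = Sum.inr y' := hT'.2.2.2 u hmu
        have h2 : g (χ.ι u) = Sum.inr y := (res_ι hres haV).trans ha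
        have : y' = y := Sum.inr.inj (h1.symm.trans h2)
        exact this ▸ hT'
      · exact absurd hpq.1 (χ.G.shared_out p ⟨hpq.2.1, hN'.1.2.1⟩ q)

private lemma arc_cases (hres : IsRestrictionOf g χ' χ) {y : Λ} {p q : V}
    (hA : χ.G.Arc p q)
    (hsurv : χ'.G.Arc p q → ArcRedundant χ' y p q)
    (hlab : g (χ.ι p) = Sum.inr y ∨ g (χ.ι q) = Sum.inr y) :
    ArcRedundant (χ.relabel g) y p q := by
  by_cases hs : χ'.G.Arc p q
  · exact transfer_arcred hres (hsurv hs)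
  · obtain ⟨y', hy'⟩ : ∃ y', ArcRedundant (χ.relabel g) y' p q := by
      by_contra hno
      exact hs ((hres.2.1 p q).2 ⟨hA, hno⟩)
    have hl' : g (χ.ι p) = Sum.inr y' ∧ g (χ.ι q) = Sum.inr y' := by
      rcases hy' with ⟨-, h1, h2, -⟩ | ⟨-, h1, h2, -⟩ <;> exact ⟨h1, h2⟩
    have : y' = y := by
      rcases hlab with h | h
      · exact Sum.inr.inj (hl'.1.symm.trans h)
      · exact Sum.inr.inj (hl'.2.symm.trans h)
    exact this ▸ hy'

private lemma transfer_tvred (hres : IsRestrictionOf g χ' χ) {y : Λ} {v : V}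
    (h : TVertRedundant χ' y v) : TVertRedundant (χ.relabel g) y v := by
  obtain ⟨hvT, hlv, hlm, hin, hout, hmin, hmout⟩ := h
  have hvV : v ∈ χ'.G.verts := VT_sub_verts _ hvT
  have hvTχ : v ∈ χ.G.VT := res_VT hres hvT
  have hvm : χ'.emb.vmap v = χ.emb.vmap v := hres.2.2.2.2.1 v hvT
  have hmV : χ'.emb.vmap v ∈ χ'.G.verts := VN_sub_verts _ (χ'.emb.vmap_mem v hvT)
  have hlvg : g (χ.ι v) = Sum.inr y := (res_ι hres hvV).trans hlv
  have hlmg : g (χ.ι (χ.emb.vmap v)) = Sum.inr y := by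
    rw [← hvm]; exact (res_ι hres hmV).trans hlm
  refine ⟨hvTχ, hlvg, hlmg, ?_, ?_, ?_, ?_⟩
  · intro u hu
    exact arc_cases hres hu (hin u) (Or.inr hlvg)
  · intro u hu
    exact arc_cases hres hu (hout u) (Or.inl hlvg)
  · intro u hu
    refine arc_cases hres hu (fun hs => ?_) (Or.inr hlmg)
    have hs' : χ'.G.Arc u (χ.emb.vmap v) := hs
    rw [← hvm] at hs'
    show ArcRedundant χ' y u (χ.emb.vmap v)
    rw [← hvm]
    exact hmin u hs'
  · intro u hu
    refine arc_cases hres hu (fun hs => ?_) (Or.inl hlmg)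
    have hs' : χ'.G.Arc (χ.emb.vmap v) u := hs
    rw [← hvm] at hs'
    show ArcRedundant χ' y (χ.emb.vmap v) u
    rw [← hvm]
    exact hmout u hs'

private lemma transfer_nvred (hres : IsRestrictionOf g χ' χ) {y : Λ} {v : V}
    (h : NVertRedundant χ' y v) : NVertRedundant (χ.relabel g) y v := by
  obtain ⟨hvN, hlv, hin, hout, hw⟩ := h
  have hvV : v ∈ χ'.G.verts := VN_sub_verts _ hvN
  have hvNχ : v ∈ χ.G.VN := res_VN hres hvN
  have hlvg : g (χ.ι v) = Sum.inr y := (res_ι hres hvV).trans hlv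
  refine ⟨hvNχ, hlvg, ?_, ?_, ?_⟩
  · intro u hu
    exact arc_cases hres hu (hin u) (Or.inr hlvg)
  · intro u hu
    exact arc_cases hres hu (hout u) (Or.inl hlvg)
  · intro w hwT hmap
    have hmap' : χ.emb.vmap w = v := hmap
    have hwTχ : w ∈ χ.G.VT := hwT
    by_cases hwv : w ∈ χ'.G.verts
    · have hwT' : w ∈ χ'.G.VT := by rw [hres.2.2.1]; exact ⟨hwTχ, hwv⟩
      exact transfer_tvred hres
        (hw w hwT' (by rw [hres.2.2.2.2.1 w hwT']; exact hmap'))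
    · obtain ⟨y'', hy''⟩ : ∃ y'', VertRedundant (χ.relabel g) y'' w := by
        by_contra hno
        exact hwv (by rw [hres.1]; exact ⟨VT_sub_verts _ hwTχ, hno⟩)
      rcases hy'' with hT | hN
      · have hl : g (χ.ι (χ.emb.vmap w)) = Sum.inr y'' := hT.2.2.1
        rw [hmap'] at hl
        have : y'' = y := Sum.inr.inj (hl.symm.trans hlvg)
        exact this ▸ hT
      · have hfix : χ.emb.vmap w = w := χ.emb.fixes w ⟨hwTχ, hN.1⟩
        rw [hfix] at hmap'
        exact absurd (hmap' ▸ hvV) hwv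

end Transfer

/-- Well-behavedness is preserved under restriction, provided the
relabelling creates no arc whose endpoints receive two distinct labels from `Y`. -/
theorem wellBehaved_restriction {V Λ : Type} (Din : DispGraph V) (S S' : Set V)
    (Ys : Set Λ) (hS' : S' ⊆ S) (g : V ⊕ Λ → V ⊕ Λ) (hg : IsRestrictionFun S S' Ys g)
    (χ : CStruct V Λ) (hχ : IsCS Din S Ys χ) (hwb : WellBehaved Din Ys χ)
    (hcond : ∀ u v, χ.G.Arc u v → ∀ y ∈ Ys, ∀ y' ∈ Ys,
      g (χ.ι u) = Sum.inr y → g (χ.ι v) = Sum.inr y' → y = y')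
    (χ' : CStruct V Λ) (hres : IsRestrictionOf g χ' χ) :
    WellBehaved Din Ys χ' := by
  refine ⟨?_, ?_, ?_, ?_⟩
  · rintro u v harc' ⟨y, -, hred⟩
    exact ((hres.2.1 u v).1 harc').2 ⟨y, transfer_arcred hres hred⟩
  · rintro v hv ⟨y, -, hred⟩
    rw [hres.1] at hv
    refine hv.2 ⟨y, ?_⟩
    rcases hred with hT | hN
    · exact Or.inl (transfer_tvred hres hT)
    · exact Or.inr (transfer_nvred hres hN)
  · intro u v harc' y hy y' hy' hu hv
    have huV : u ∈ χ'.G.verts := χ'.G.arc_left harc'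
    have hvV : v ∈ χ'.G.verts := χ'.G.arc_right harc'
    exact hcond u v ((hres.2.1 u v).1 harc').1 y hy y' hy'
      ((res_ι hres huV).trans hu) ((res_ι hres hvV).trans hv)
  · intro u huV v hvV s t hs ht hpath
    have husub : u ∈ χ.G.verts := by
      rw [hres.1] at huV; exact huV.1
    have hvsub : v ∈ χ.G.verts := by
      rw [hres.1] at hvV; exact hvV.1
    have key : ∀ w ∈ χ'.G.verts, ∀ r : V, χ'.ι w = Sum.inl r → χ.ι w = Sum.inl r := by
      intro w hwV r hr
      have hwχ : w ∈ χ.G.verts := by rw [hres.1] at hwV; exact hwV.1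
      have hgw : g (χ.ι w) = Sum.inl r := (res_ι hres hwV).trans hr
      rcases hχ.1.1 w hwχ with ⟨s₀, hs₀, he⟩ | ⟨y₀, hy₀, he⟩
      · rw [he] at hgw ⊢
        by_cases hmem : s₀ ∈ S'
        · rw [hg.1 s₀ hmem] at hgw
          exact hgw
        · obtain ⟨yy, -, hgy⟩ := hg.2.1 s₀ hs₀ hmem
          rw [hgy] at hgw
          exact absurd hgw (by simp)
      · obtain ⟨y₁, -, hgy⟩ := hg.2.2 y₀ hy₀
        rw [he, hgy] at hgw
        exact absurd hgw (by simp)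
    have hpathχ : Relation.ReflTransGen χ.G.Arc u v :=
      Relation.ReflTransGen.mono (fun a b h => ((hres.2.1 a b).1 h).1) u v hpath
    exact hwb.2.2.2 u husub v hvsub s t (key u huV s hs) (key v hvV t ht) hpathχ

end TreeContainment
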